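/- Let v ∈ ℤⁿ, M = ‖v‖_∞, and suppose indices i ≠ j satisfy: it is not the case that v_i = v_j = 0; it is not the case that one of |v_i|, |v_j| equals M and the other is 0; and it is not the case that both v_i and v_j are good (0 < |·| < M) with |v_i| = |v_j|. Then there exist an index pair (s,t) ∈ {(i,j),(j,i)} and a sign ε = ±1 such that the vector w obtained from v by replacing v_s with v_s + ε v_t satisfies w < v in the order given by comparing lexicographically (‖·‖_∞, number of maximal coordinates, n minus number of good coordinates, ‖·‖₁). -/

import Mathlib

/-!
Let `|v_j| ≤ |v_i|` and pick the sign so that `|v_i + ε v_j| = |v_i| - |v_j|`. If `v_i` is maximal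
and `v_j ≠ 0`, this move lowers a maximal coordinate, so `‖·‖_∞` or `m` drops. If `v_j = 0`, then
`v_i` is good, and the move `v_j ↦ v_j + v_i` turns a zero coordinate into a good one, so `g` grows
while `‖·‖_∞` and `m` stay put. Otherwise both coordinates are good with `|v_j| < |v_i|`, and the
first move keeps `v_i` good while lowering `‖·‖₁`. The three excluded configurations are exactly
the ones in which none of these moves is available.
-/

/-- The sup-norm `‖x‖_∞` of `x ∈ ℤⁿ`. -/
def normInf (n : ℕ) (x : Fin n → ℤ) : ℕ := Finset.univ.sup fun i => (x i).natAbs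

/-- `m(x)`: the number of maximal coordinates. -/
def maxCount (n : ℕ) (x : Fin n → ℤ) : ℕ :=
  (Finset.univ.filter fun i => (x i).natAbs = normInf n x).card

/-- `g(x)`: the number of good coordinates. -/
def goodCount (n : ℕ) (x : Fin n → ℤ) : ℕ :=
  (Finset.univ.filter fun i => 0 < (x i).natAbs ∧ (x i).natAbs < normInf n x).card

/-- The `ℓ¹`-norm `‖x‖₁`. -/
def norm1 (n : ℕ) (x : Fin n → ℤ) : ℕ := ∑ i, (x i).natAbs

/-- `x < y` iff `N(x) < N(y)` lexicographically, `N(x) = (‖x‖_∞, m(x), n − g(x), ‖x‖₁)`. -/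
def vecLt (n : ℕ) (x y : Fin n → ℤ) : Prop :=
  normInf n x < normInf n y ∨ (normInf n x = normInf n y ∧
    (maxCount n x < maxCount n y ∨ (maxCount n x = maxCount n y ∧
      (n - goodCount n x < n - goodCount n y ∨ (n - goodCount n x = n - goodCount n y ∧
        norm1 n x < norm1 n y)))))

open Finset Function

theorem Finset.sum_comp_update_add {ι α β : Type*} [Fintype ι] [DecidableEq ι] [AddCommMonoid β]
    (f : α → β) (v : ι → α) (s : ι) (c : α) :
    ∑ k, f (update v s c k) + f (v s) = ∑ k, f (v k) + f c := by
  have h := sum_update_of_mem (mem_univ s) (f ∘ v) (f c)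
  simp only [← comp_update, comp_apply] at h
  rw [h, sum_eq_add_sum_sdiff_singleton_of_mem (mem_univ s) fun k => f (v k)]
  abel

theorem Finset.card_filter_update_add {ι α : Type*} [Fintype ι] [DecidableEq ι]
    (p : α → Prop) [DecidablePred p] (v : ι → α) (s : ι) (c : α) :
    #{k | p (update v s c k)} + (if p (v s) then 1 else 0) =
      #{k | p (v k)} + (if p c then 1 else 0) := by
  simp only [card_filter]
  exact sum_comp_update_add (fun x => if p x then 1 else 0) v s c

theorem Int.exists_sign_natAbs_add_mul_eq_sub (a b : ℤ) (h : b.natAbs ≤ a.natAbs) :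
    ∃ ε : ℤ, (ε = 1 ∨ ε = -1) ∧ (a + ε * b).natAbs = a.natAbs - b.natAbs := by
  rcases le_or_gt 0 a with ha | ha <;> rcases le_or_gt 0 b with hb | hb
  · exact ⟨-1, .inr rfl, by omega⟩
  · exact ⟨1, .inl rfl, by omega⟩
  · exact ⟨1, .inl rfl, by omega⟩
  · exact ⟨-1, .inr rfl, by omega⟩

section Update

variable {n : ℕ} {v : Fin n → ℤ} {s : Fin n} {c : ℤ}

theorem natAbs_le_normInf (v : Fin n → ℤ) (k : Fin n) : (v k).natAbs ≤ normInf n v :=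
  le_sup (f := fun i => (v i).natAbs) (mem_univ k)

theorem exists_natAbs_eq_normInf (h : 0 < normInf n v) : ∃ k, (v k).natAbs = normInf n v := by
  by_contra! hne
  exact (Finset.sup_lt_iff h).2 (fun k _ => (natAbs_le_normInf v k).lt_of_ne (hne k)) |>.false

theorem goodCount_le (x : Fin n → ℤ) : goodCount n x ≤ n :=
  (card_filter_le _ _).trans_eq (card_fin n)

theorem normInf_update_le (h : c.natAbs ≤ normInf n v) :
    normInf n (update v s c) ≤ normInf n v := by
  refine Finset.sup_le fun k _ => ?_
  rcases eq_or_ne k s with rfl | hk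
  · simpa using h
  · simpa [hk] using natAbs_le_normInf v k

theorem normInf_update_of_lt (hs : (v s).natAbs < normInf n v) (hc : c.natAbs < normInf n v) :
    normInf n (update v s c) = normInf n v := by
  refine (normInf_update_le hc.le).antisymm ?_
  obtain ⟨k, hk⟩ := exists_natAbs_eq_normInf (v := v) (by omega)
  have hks : k ≠ s := by rintro rfl; omega
  calc normInf n v = (update v s c k).natAbs := by rw [update_of_ne hks, hk]
    _ ≤ _ := natAbs_le_normInf _ k

theorem maxCount_update_add (h : normInf n (update v s c) = normInf n v) :
    maxCount n (update v s c) + (if (v s).natAbs = normInf n v then 1 else 0) =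
      maxCount n v + (if c.natAbs = normInf n v then 1 else 0) := by
  simp only [maxCount, h]
  exact card_filter_update_add (fun x : ℤ => x.natAbs = normInf n v) v s c

theorem goodCount_update_add (h : normInf n (update v s c) = normInf n v) :
    goodCount n (update v s c) +
        (if 0 < (v s).natAbs ∧ (v s).natAbs < normInf n v then 1 else 0) =
      goodCount n v + (if 0 < c.natAbs ∧ c.natAbs < normInf n v then 1 else 0) := by
  simp only [goodCount, h]
  exact card_filter_update_add (fun x : ℤ => 0 < x.natAbs ∧ x.natAbs < normInf n v) v s c

theorem norm1_update_add : norm1 n (update v s c) + (v s).natAbs = norm1 n v + c.natAbs :=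
  sum_comp_update_add Int.natAbs v s c

theorem vecLt_update_of_natAbs_eq_normInf (hs : (v s).natAbs = normInf n v)
    (hc : c.natAbs < normInf n v) : vecLt n (update v s c) v := by
  rcases (normInf_update_le (s := s) hc.le).lt_or_eq with hlt | heq
  · exact .inl hlt
  · have := maxCount_update_add heq
    simp only [hs, hc.ne, if_true, if_false] at this
    exact .inr ⟨heq, .inl (by omega)⟩

theorem vecLt_update_of_eq_zero (hs : v s = 0) (hc₀ : 0 < c.natAbs)
    (hc : c.natAbs < normInf n v) : vecLt n (update v s c) v := by
  have hs' : (v s).natAbs = 0 := by simp [hs]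
  have heq := normInf_update_of_lt (s := s) (by omega) hc
  have hmax := maxCount_update_add heq
  have hgood := goodCount_update_add heq
  have := goodCount_le (update v s c)
  simp only [hs', hc.ne, hc₀, hc, (hc₀.trans hc).ne, lt_irrefl, false_and, and_self, if_true,
    if_false] at hmax hgood
  exact .inr ⟨heq, .inr ⟨by omega, .inl (by omega)⟩⟩

theorem vecLt_update_of_natAbs_lt (hc₀ : 0 < c.natAbs) (hcs : c.natAbs < (v s).natAbs)
    (hs : (v s).natAbs < normInf n v) : vecLt n (update v s c) v := by
  have heq := normInf_update_of_lt hs (hcs.trans hs)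
  have hmax := maxCount_update_add heq
  have hgood := goodCount_update_add heq
  have hnorm1 := norm1_update_add (v := v) (s := s) (c := c)
  simp only [hs.ne, (hcs.trans hs).ne, hc₀, hcs.trans hs, hc₀.trans hcs, hs, and_self,
    if_true, if_false] at hmax hgood
  exact .inr ⟨heq, .inr ⟨by omega, .inr ⟨by omega, by omega⟩⟩⟩

end Update

theorem stmt_15_general (n : ℕ) (v : Fin n → ℤ) (M : ℕ) (hM : M = normInf n v)
    (i j : Fin n)
    (h0 : ¬ (v i = 0 ∧ v j = 0))
    (h1 : ¬ (((v i).natAbs = M ∧ v j = 0) ∨ ((v j).natAbs = M ∧ v i = 0)))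
    (h2 : ¬ ((0 < (v i).natAbs ∧ (v i).natAbs < M) ∧
      (0 < (v j).natAbs ∧ (v j).natAbs < M) ∧ (v i).natAbs = (v j).natAbs)) :
    ∃ s t : Fin n, ((s = i ∧ t = j) ∨ (s = j ∧ t = i)) ∧
      ∃ ε : ℤ, (ε = 1 ∨ ε = -1) ∧
        vecLt n (Function.update v s (v s + ε * v t)) v := by
  wlog hji : (v j).natAbs ≤ (v i).natAbs generalizing i j
  · obtain ⟨s, t, hst, hε⟩ := this j i (fun h => h0 h.symm) (fun h => h1 h.symm)
      (fun h => h2 ⟨h.2.1, h.1, h.2.2.symm⟩) (by omega)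
    exact ⟨s, t, hst.symm, hε⟩
  subst hM
  have hiM := natAbs_le_normInf v i
  rcases eq_or_ne (v j) 0 with hj | hj
  · have hi : 0 < (v i).natAbs := Int.natAbs_pos.2 fun hi => h0 ⟨hi, hj⟩
    have hiM' : (v i).natAbs < normInf n v := hiM.lt_of_ne fun h => h1 (.inl ⟨h, hj⟩)
    refine ⟨j, i, .inr ⟨rfl, rfl⟩, 1, .inl rfl, vecLt_update_of_eq_zero hj ?_ ?_⟩ <;>
      rwa [hj, zero_add, one_mul]
  have hj : 0 < (v j).natAbs := Int.natAbs_pos.2 hj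
  obtain ⟨ε, hε, hc⟩ := Int.exists_sign_natAbs_add_mul_eq_sub (v i) (v j) hji
  refine ⟨i, j, .inl ⟨rfl, rfl⟩, ε, hε, ?_⟩
  rcases hiM.eq_or_lt with hiM | hiM
  · exact vecLt_update_of_natAbs_eq_normInf hiM (by omega)
  · have hji' : (v j).natAbs < (v i).natAbs :=
      hji.lt_of_ne fun h => h2 ⟨⟨by omega, hiM⟩, ⟨hj, by omega⟩, h.symm⟩
    exact vecLt_update_of_natAbs_lt (by omega) (by omega) hiM

/-- Let `v ∈ ℤⁿ`, `M = ‖v‖_∞`, and `i ≠ j` such that: not `v_i = v_j = 0`;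
not (one of `|v_i|, |v_j|` equals `M` and the other is `0`); and not (both `v_i, v_j` are
good with `|v_i| = |v_j|`). Then for some `(s,t) ∈ {(i,j),(j,i)}` and sign `ε = ±1`,
replacing `v_s` by `v_s + ε v_t` yields a vector `w < v` in the lexicographic `N`-order. -/
theorem stmt_15 (n : ℕ) (v : Fin n → ℤ) (M : ℕ) (hM : M = normInf n v)
    (i j : Fin n) (hij : i ≠ j)
    (h0 : ¬ (v i = 0 ∧ v j = 0))
    (h1 : ¬ (((v i).natAbs = M ∧ v j = 0) ∨ ((v j).natAbs = M ∧ v i = 0)))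
    (h2 : ¬ ((0 < (v i).natAbs ∧ (v i).natAbs < M) ∧
      (0 < (v j).natAbs ∧ (v j).natAbs < M) ∧ (v i).natAbs = (v j).natAbs)) :
    ∃ s t : Fin n, ((s = i ∧ t = j) ∨ (s = j ∧ t = i)) ∧
      ∃ ε : ℤ, (ε = 1 ∨ ε = -1) ∧
        vecLt n (Function.update v s (v s + ε * v t)) v :=
  stmt_15_general n v M hM i j h0 h1 h2
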